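/- arXiv:1208.5408 — 2 statements merged into one kernel-verified Lean document; each statement's English description precedes it below -/
import Mathlib

section
/- Let μ be a probability measure on [0,2π) with ∫₀^{2π} e^{ix} dμ(x) = 0 and Z_μ(t) = ∫₀^t exp(i F_μ⁻¹(u)) du. If there exist t₁ < t₂ in [0,1) with Z_μ(t₁) = Z_μ(t₂), then μ is supported on two antipodal points: there is θ with F_μ⁻¹(t₂) = π + F_μ⁻¹(t₁) and μ({F_μ⁻¹(t₁)}) = μ({F_μ⁻¹(t₂)}) = 1/2. -/
open MeasureTheory Real Set

/-- Cumulative distribution function `F_μ(x) = μ([0,x])`. -/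
noncomputable def cdf' (μ : Measure ℝ) (x : ℝ) : ℝ := (μ (Set.Icc 0 x)).toReal

/-- Generalized inverse `F_μ⁻¹(y) = inf {x ≥ 0 : F_μ(x) ≥ y}`. -/
noncomputable def qf (μ : Measure ℝ) (y : ℝ) : ℝ := sInf {x : ℝ | 0 ≤ x ∧ y ≤ cdf' μ x}

/-- The curve `Z_μ(t) = ∫₀^t exp(i F_μ⁻¹(u)) du`. -/
noncomputable def Zc (μ : Measure ℝ) (t : ℝ) : ℂ :=
  ∫ u in (0:ℝ)..t, Complex.exp (Complex.I * (qf μ u))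

/-!
On `(0, 1)` the quantile function `g = F_μ⁻¹` is nondecreasing, takes values in `[0, 2π)`, and
pushes Lebesgue measure forward to `μ`. Put `α = g t₁` and `β = g t₂`. The hypotheses say that
`exp (i g)` has mean zero on `(0, 1)` and on `(t₁, t₂]`, hence also on the complement
`(0, t₁] ∪ (t₂, 1)`. A function with values in a closed arc of length at most `π` can have mean
zero only if the arc is a half circle and the function sits at its endpoints almost everywhere
(project onto the bisector of the arc). On `(t₁, t₂]` the values of `g` lie in `[α, β]`; on the
complement, after adding `2π` on `(0, t₁]`, they lie in `[β, α + 2π]`. These two arcs have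
total length `2π`, so both are half circles: `β = α + π` and `g ∈ {α, β}` almost everywhere.
Hence `μ` lives on the antipodal points `α, β`, and its vanishing first moment forces equal
masses.
-/

open Filter ProbabilityTheory Complex

lemma qf_nonneg (μ : Measure ℝ) (u : ℝ) : 0 ≤ qf μ u :=
  Real.sInf_nonneg fun _ hx => hx.1

section Quantile

variable {μ : Measure ℝ} [IsProbabilityMeasure μ] (h0 : μ (Iio 0) = 0)
include h0

lemma cdf'_eq_cdf (x : ℝ) : cdf' μ x = cdf μ x := by
  rw [cdf_eq_real, cdf', measureReal_def, ← Ici_inter_Iic, inter_comm,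
    measure_inter_conull (by rwa [compl_Ici])]

lemma nonempty_setOf_le_cdf' {u : ℝ} (hu : u < 1) :
    {x : ℝ | 0 ≤ x ∧ u ≤ cdf' μ x}.Nonempty := by
  obtain ⟨x, hux, hx⟩ :=
    (((tendsto_cdf_atTop μ).eventually (eventually_ge_nhds hu)).and (eventually_ge_atTop 0)).exists
  exact ⟨x, hx, by rwa [cdf'_eq_cdf h0]⟩

lemma monotoneOn_qf : MonotoneOn (qf μ) (Iio 1) :=
  fun _ _ _ hv huv => csInf_le_csInf ⟨0, fun _ hx => hx.1⟩ (nonempty_setOf_le_cdf' h0 hv)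
    fun _ hx => ⟨hx.1, huv.trans hx.2⟩

lemma aemeasurable_qf {s : Set ℝ} (hs : s ⊆ Iio 1) :
    AEMeasurable (qf μ) (volume.restrict s) :=
  (aemeasurable_restrict_of_monotoneOn measurableSet_Iio (monotoneOn_qf h0)).mono_measure
    (Measure.restrict_mono hs le_rfl)

lemma qf_le_iff {u x : ℝ} (hu₀ : 0 < u) (hu₁ : u < 1) :
    qf μ u ≤ x ↔ u ≤ cdf μ x := by
  constructor
  · intro hux
    have hright : ∀ y, x < y → u ≤ cdf μ y := fun y hxy => by
      obtain ⟨z, ⟨-, huz⟩, hzy⟩ :=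
        exists_lt_of_csInf_lt (nonempty_setOf_le_cdf' h0 hu₁) (hux.trans_lt hxy)
      rw [cdf'_eq_cdf h0] at huz
      exact huz.trans (monotone_cdf μ hzy.le)
    exact ge_of_tendsto ((cdf μ).right_continuous x |>.mono Ioi_subset_Ici_self)
      (eventually_nhdsWithin_of_forall hright)
  · intro hux
    have hx : 0 ≤ x := by
      by_contra! hx
      rw [← cdf'_eq_cdf h0, cdf', Icc_eq_empty hx.not_ge, measure_empty,
        ENNReal.toReal_zero] at hux
      linarith
    exact csInf_le ⟨0, fun _ hz => hz.1⟩ ⟨hx, by rwa [cdf'_eq_cdf h0]⟩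

lemma map_qf : (volume.restrict (Ioo 0 1)).map (qf μ) = μ := by
  refine Measure.ext_of_Iic _ _ fun x => ?_
  have hpre : qf μ ⁻¹' Iic x ∩ Ioo 0 1 = Iic (cdf μ x) ∩ Ioo 0 1 := by
    ext u
    simp only [mem_inter_iff, mem_preimage, mem_Iic, and_congr_left_iff]
    exact fun hu => qf_le_iff h0 hu.1 hu.2
  have hIoc : Iic (cdf μ x) ∩ Ioc 0 1 = Ioc 0 (cdf μ x) := by
    rw [inter_comm, Ioc_inter_Iic, min_eq_right (cdf_le_one μ x)]
  rw [Measure.map_apply_of_aemeasurable (aemeasurable_qf h0 Ioo_subset_Iio_self)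
    measurableSet_Iic, Measure.restrict_apply' measurableSet_Ioo, hpre,
    measure_congr (ae_eq_refl _ |>.inter Ioo_ae_eq_Ioc), hIoc, volume_Ioc, sub_zero, ofReal_cdf]

lemma ae_iff_ae_qf {p : ℝ → Prop} (hp : MeasurableSet {x | p x}) :
    (∀ᵐ x ∂μ, p x) ↔ ∀ᵐ u ∂volume.restrict (Ioo 0 1), p (qf μ u) := by
  conv_lhs => rw [← map_qf h0]
  exact ae_map_iff (aemeasurable_qf h0 Ioo_subset_Iio_self) hp

lemma setIntegral_comp_qf {E : Type*} [NormedAddCommGroup E] [NormedSpace ℝ E] {F : ℝ → E}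
    (hF : AEStronglyMeasurable F μ) :
    ∫ u in Ioo 0 1, F (qf μ u) = ∫ x, F x ∂μ := by
  have h := integral_map (aemeasurable_qf h0 Ioo_subset_Iio_self) ((map_qf h0).symm ▸ hF)
  rwa [map_qf h0, eq_comm] at h

end Quantile

section CircleMean

variable {X : Type*} [MeasurableSpace X] {ν : Measure X} [IsFiniteMeasure ν] {f : X → ℝ}

lemma integral_cos_sub_eq_zero (hf : AEMeasurable f ν) (h : ∫ x, exp (I * f x) ∂ν = 0)
    (φ : ℝ) :
    ∫ x, Real.cos (f x - φ) ∂ν = 0 := by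
  have hint : Integrable (fun x => exp (-φ * I) * exp (I * f x)) ν :=
    (Integrable.of_bound (by fun_prop) 1
      (ae_of_all _ fun x => (norm_exp_I_mul_ofReal (f x)).le)).const_mul _
  have hre : ∀ x, Real.cos (f x - φ) = RCLike.re (exp (-φ * I) * exp (I * f x)) := fun x => by
    rw [← Complex.exp_add,
      show -φ * I + I * f x = ((f x - φ : ℝ) : ℂ) * I by push_cast; ring,
      RCLike.re_to_complex, exp_ofReal_mul_I_re]
  simp_rw [hre, integral_re hint, integral_const_mul, h, mul_zero, map_zero]

lemma ae_abs_sub_eq_pi_div_two_of_integral_exp_eq_zero (hf : AEMeasurable f ν)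
    (h : ∫ x, exp (I * f x) ∂ν = 0) {φ : ℝ} (hφ : ∀ᵐ x ∂ν, |f x - φ| ≤ π / 2) :
    ∀ᵐ x ∂ν, |f x - φ| = π / 2 := by
  have hcos : 0 ≤ᵐ[ν] fun x => Real.cos (f x - φ) := by
    filter_upwards [hφ] with x hx
    exact cos_nonneg_of_neg_pi_div_two_le_of_le (abs_le.1 hx).1 (abs_le.1 hx).2
  have hint : Integrable (fun x => Real.cos (f x - φ)) ν :=
    Integrable.of_bound (by fun_prop) 1 (ae_of_all _ fun x => by
      simpa only [Real.norm_eq_abs] using abs_cos_le_one _)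
  filter_upwards [hφ, (integral_eq_zero_iff_of_nonneg_ae hcos hint).1
    (integral_cos_sub_eq_zero hf h φ)] with x hle hzero
  refine hle.antisymm (not_lt.1 fun hlt => ?_)
  exact (cos_pos_of_mem_Ioo (abs_lt.1 hlt)).ne' hzero

lemma ae_eq_endpoint_of_integral_exp_eq_zero (hf : AEMeasurable f ν)
    (h : ∫ x, exp (I * f x) ∂ν = 0) {a b : ℝ} (hab : b ≤ a + π)
    (hfab : ∀ᵐ x ∂ν, f x ∈ Icc a b) :
    ∀ᵐ x ∂ν, b = a + π ∧ (f x = a ∨ f x = b) := by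
  have hmid : ∀ᵐ x ∂ν, |f x - (a + b) / 2| ≤ π / 2 := by
    filter_upwards [hfab] with x hx
    rw [abs_le]
    constructor <;> linarith [hx.1, hx.2]
  filter_upwards [ae_abs_sub_eq_pi_div_two_of_integral_exp_eq_zero hf h hmid, hfab]
    with x hx hxab
  rcases abs_eq (by positivity) |>.1 hx with hx | hx
  · exact ⟨by linarith [hxab.2], Or.inr (by linarith [hxab.2])⟩
  · exact ⟨by linarith [hxab.1], Or.inl (by linarith [hxab.1])⟩

end CircleMean

lemma measure_singleton_eq_half_of_integral_exp_eq_zero {μ : Measure ℝ}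
    [IsProbabilityMeasure μ] {a : ℝ} (hμ : ∀ᵐ x ∂μ, x = a ∨ x = a + π)
    (h : ∫ x, exp (I * x) ∂μ = 0) :
    μ {a} = 1 / 2 ∧ μ {a + π} = 1 / 2 := by
  have hne : a ≠ a + π := by linarith [pi_pos]
  have hrestrict : μ.restrict ({a, a + π} : Finset ℝ) = μ :=
    Measure.restrict_eq_self_of_ae_mem (by simpa using hμ)
  have hsum (F : ℝ → ℂ) (hF : Integrable F μ) :
      ∫ x, F x ∂μ = μ.real {a} • F a + μ.real {a + π} • F (a + π) := by
    conv_lhs => rw [← hrestrict]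
    rw [setIntegral_finset _ (by rwa [IntegrableOn, hrestrict]), Finset.sum_pair hne]
  have htotal : μ.real {a} + μ.real {a + π} = 1 := by
    have := hsum (fun _ => 1) (integrable_const _)
    simp only [integral_const, probReal_univ, one_smul, Complex.real_smul, mul_one] at this
    exact_mod_cast this.symm
  have hbalance : μ.real {a} = μ.real {a + π} := by
    have := hsum (fun x => exp (I * x))
      (Integrable.of_bound (by fun_prop) 1 (ae_of_all _ fun x => (norm_exp_I_mul_ofReal x).le))
    have hshift : exp (I * ↑(a + π)) = -exp (I * a) := by
      rw [ofReal_add, mul_add, Complex.exp_add, mul_comm I (π : ℂ), exp_pi_mul_I, mul_neg_one]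
    rw [h, hshift, Complex.real_smul, Complex.real_smul] at this
    have hfactor : ((μ.real {a} : ℂ) - μ.real {a + π}) * exp (I * a) = 0 := by
      linear_combination -this
    exact_mod_cast sub_eq_zero.1 ((mul_eq_zero.1 hfactor).resolve_right (exp_ne_zero _))
  have hhalf : ∀ x, μ.real {x} = 1 / 2 → μ {x} = 1 / 2 := fun x hx => by
    rw [← ofReal_measureReal, hx, ENNReal.ofReal_div_of_pos two_pos, ENNReal.ofReal_one,
      ENNReal.ofReal_ofNat]
  exact ⟨hhalf _ (by linarith), hhalf _ (by linarith)⟩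

lemma exp_I_mul_add_two_pi_indicator (s : Set ℝ) (x u : ℝ) :
    exp (I * ↑(x + s.indicator (fun _ => 2 * π) u)) = exp (I * x) := by
  by_cases h : u ∈ s
  · rw [indicator_of_mem h, ofReal_add, mul_add, Complex.exp_add, ofReal_mul, ofReal_ofNat,
      show I * (2 * π) = 2 * π * I by ring, exp_two_pi_mul_I, mul_one]
  · rw [indicator_of_notMem h, add_zero]

section ZeroLoop

variable {μ : Measure ℝ} [IsProbabilityMeasure μ] (h0 : μ (Iio 0) = 0)
include h0

lemma integrableOn_exp_qf {s : Set ℝ} (hs : s ⊆ Iio 1) (hfin : volume s < ⊤) :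
    IntegrableOn (fun u => exp (I * qf μ u)) s := by
  have hqf := aemeasurable_qf h0 hs
  exact IntegrableOn.of_bound hfin (by fun_prop) 1
    (ae_of_all _ fun u => (norm_exp_I_mul_ofReal _).le)

lemma Zc_sub_Zc {a b : ℝ} (hab : a ≤ b) (hb : b < 1) :
    Zc μ b - Zc μ a = ∫ u in Ioc a b, exp (I * qf μ u) := by
  have hint : ∀ c < 1, IntervalIntegrable (fun u => exp (I * qf μ u)) volume 0 c :=
    fun c hc => (intervalIntegrable_iff).2 <| integrableOn_exp_qf h0
      (fun u hu => hu.2.trans_lt (max_lt zero_lt_one hc)) measure_Ioc_lt_top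
  rw [Zc, Zc, intervalIntegral.integral_interval_sub_left (hint b hb) (hint a (hab.trans_lt hb)),
    intervalIntegral.integral_of_le hab]

lemma qf_lt_of_ae_lt {c t : ℝ} (ht₀ : 0 ≤ t) (ht₁ : t < 1)
    (hc : ∀ᵐ u ∂volume.restrict (Ioo 0 1), qf μ u < c) : qf μ t < c := by
  obtain ⟨u, hu, hlt⟩ := Measure.exists_mem_of_measure_ne_zero_of_ae (s := Ioo t 1)
    (by simp [ht₁]) (ae_restrict_of_ae_restrict_of_subset (Ioo_subset_Ioo_left ht₀) hc)
  exact (monotoneOn_qf h0 ht₁ hu.2 hu.1.le).trans_lt hlt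

lemma setIntegral_exp_qf_sdiff_Ioc {t₁ t₂ : ℝ} (ht₁ : 0 ≤ t₁) (ht₂ : t₂ < 1)
    (hall : ∫ u in Ioo 0 1, exp (I * qf μ u) = 0)
    (hloop : ∫ u in Ioc t₁ t₂, exp (I * qf μ u) = 0) :
    ∫ u in Ioo 0 1 \ Ioc t₁ t₂, exp (I * qf μ u) = 0 := by
  rw [setIntegral_sdiff measurableSet_Ioc
    (integrableOn_exp_qf h0 (fun u hu => hu.2) measure_Ioo_lt_top)
    (fun u hu => ⟨ht₁.trans_lt hu.1, hu.2.trans_lt ht₂⟩), hall, hloop, sub_self]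

variable {t₁ t₂ : ℝ} (ht : t₁ < t₂) (ht₂ : t₂ < 1)
  (hloop : ∫ u in Ioc t₁ t₂, exp (I * qf μ u) = 0)
include ht ht₂ hloop

lemma ae_qf_Ioc_eq_or_eq (hab : qf μ t₂ ≤ qf μ t₁ + π) :
    ∀ᵐ u ∂volume.restrict (Ioc t₁ t₂),
      qf μ t₂ = qf μ t₁ + π ∧ (qf μ u = qf μ t₁ ∨ qf μ u = qf μ t₂) := by
  have hsub : Ioc t₁ t₂ ⊆ Iio 1 := fun u hu => hu.2.trans_lt ht₂
  refine ae_eq_endpoint_of_integral_exp_eq_zero (aemeasurable_qf h0 hsub) hloop hab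
    (ae_restrict_of_forall_mem measurableSet_Ioc fun u hu => ⟨?_, ?_⟩)
  · exact monotoneOn_qf h0 (ht.trans ht₂) (hsub hu) hu.1.le
  · exact monotoneOn_qf h0 (hsub hu) ht₂ hu.2

lemma qf_add_pi_le : qf μ t₁ + π ≤ qf μ t₂ := by
  by_contra! hlt
  obtain ⟨u, -, hu, -⟩ := Measure.exists_mem_of_measure_ne_zero_of_ae (by simp [ht])
    (ae_qf_Ioc_eq_or_eq h0 ht ht₂ hloop hlt.le)
  linarith

variable (ht₁ : 0 ≤ t₁) (hall : ∫ u in Ioo 0 1, exp (I * qf μ u) = 0)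
  (h2π : ∀ᵐ u ∂volume.restrict (Ioo 0 1), qf μ u < 2 * π)
include ht₁ hall h2π

lemma ae_qf_sdiff_Ioc_eq_or_eq :
    ∀ᵐ u ∂volume.restrict (Ioo 0 1 \ Ioc t₁ t₂),
      qf μ t₂ = qf μ t₁ + π ∧ (qf μ u = qf μ t₁ ∨ qf μ u = qf μ t₂) := by
  set α := qf μ t₁
  set β := qf μ t₂
  have hrest : MeasurableSet (Ioo (0 : ℝ) 1 \ Ioc t₁ t₂) :=
    measurableSet_Ioo.diff measurableSet_Ioc
  have : IsFiniteMeasure (volume.restrict (Ioo (0 : ℝ) 1 \ Ioc t₁ t₂)) :=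
    isFiniteMeasure_restrict.2 (measure_mono sdiff_subset |>.trans_lt measure_Ioo_lt_top).ne
  have hβ : β < 2 * π := qf_lt_of_ae_lt h0 (ht₁.trans ht.le) ht₂ h2π
  set θ : ℝ → ℝ := fun u => qf μ u + (Iic t₁).indicator (fun _ => 2 * π) u
  have hθ : ∀ u ∈ Ioo 0 1 \ Ioc t₁ t₂,
      (θ u = qf μ u + 2 * π ∧ qf μ u ≤ α) ∨ (θ u = qf μ u ∧ β ≤ qf μ u) := by
    rintro u ⟨hu, hu'⟩
    rcases le_or_gt u t₁ with h | h
    · exact Or.inl ⟨by simp [θ, h], monotoneOn_qf h0 hu.2 (ht.trans ht₂) h⟩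
    · have h' : t₂ < u := lt_of_not_ge fun h' => hu' ⟨h, h'⟩
      exact Or.inr ⟨by simp [θ, h.not_ge], monotoneOn_qf h0 ht₂ hu.2 h'.le⟩
  have hθexp : ∫ u in Ioo 0 1 \ Ioc t₁ t₂, exp (I * θ u) = 0 := by
    simp_rw [θ, exp_I_mul_add_two_pi_indicator]
    exact setIntegral_exp_qf_sdiff_Ioc h0 ht₁ ht₂ hall hloop
  have h2π' : ∀ᵐ u ∂volume.restrict (Ioo 0 1 \ Ioc t₁ t₂), qf μ u < 2 * π :=
    ae_restrict_of_ae_restrict_of_subset sdiff_subset h2π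
  have harc := ae_eq_endpoint_of_integral_exp_eq_zero (f := θ) (a := β) (b := α + 2 * π)
    ((aemeasurable_qf h0 fun u hu => hu.1.2).add
      (measurable_const.indicator measurableSet_Iic).aemeasurable) hθexp
    (by linarith [qf_add_pi_le h0 ht ht₂ hloop])
    (by
      filter_upwards [ae_restrict_mem hrest, h2π'] with u hu hlt
      rcases hθ u hu with ⟨h, h'⟩ | ⟨h, h'⟩ <;> constructor <;>
        linarith [qf_nonneg μ u, qf_nonneg μ t₁])
  filter_upwards [harc, ae_restrict_mem hrest, h2π'] with u ⟨hπ, hu⟩ hmem hlt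
  refine ⟨by linarith, ?_⟩
  rcases hθ u hmem with ⟨h, h'⟩ | ⟨h, h'⟩ <;> rcases hu with hu | hu
  · linarith [qf_nonneg μ u]
  · exact Or.inl (by linarith)
  · exact Or.inr (by linarith)
  · linarith [qf_nonneg μ t₁]

lemma qf_eq_add_pi_and_ae_qf_eq_or_eq :
    qf μ t₂ = qf μ t₁ + π ∧
      ∀ᵐ u ∂volume.restrict (Ioo 0 1), qf μ u = qf μ t₁ ∨ qf μ u = qf μ t₂ := by
  have hrest := ae_qf_sdiff_Ioc_eq_or_eq h0 ht ht₂ hloop ht₁ hall h2π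
  have hright : Ioo t₂ 1 ⊆ Ioo 0 1 \ Ioc t₁ t₂ := fun u hu =>
    ⟨⟨(ht₁.trans ht.le).trans_lt hu.1, hu.2⟩, fun h => h.2.not_gt hu.1⟩
  obtain ⟨-, -, hanti, -⟩ := Measure.exists_mem_of_measure_ne_zero_of_ae
    ((measure_mono hright).trans_lt' (by simp [ht₂])).ne' hrest
  refine ⟨hanti, ?_⟩
  have hIoc : Ioc t₁ t₂ ⊆ Ioo 0 1 := fun u hu =>
    ⟨ht₁.trans_lt hu.1, hu.2.trans_lt ht₂⟩
  rw [← sdiff_union_of_subset hIoc, ae_restrict_union_iff]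
  exact ⟨hrest.mono fun _ hu => hu.2,
    (ae_qf_Ioc_eq_or_eq h0 ht ht₂ hloop hanti.le).mono fun _ hu => hu.2⟩

end ZeroLoop

theorem stmt1 (μ : Measure ℝ) [IsProbabilityMeasure μ]
    (hsupp : μ (Set.Ico 0 (2*π))ᶜ = 0)
    (hclosed : ∫ x, Complex.exp (Complex.I * x) ∂μ = 0)
    (t₁ t₂ : ℝ) (h1 : t₁ ∈ Set.Ico (0:ℝ) 1) (h2 : t₂ ∈ Set.Ico (0:ℝ) 1)
    (hlt : t₁ < t₂) (heq : Zc μ t₁ = Zc μ t₂) :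
    qf μ t₂ = π + qf μ t₁ ∧ μ {qf μ t₁} = 1/2 ∧ μ {qf μ t₂} = 1/2 := by
  have hIco : ∀ᵐ x ∂μ, x ∈ Ico 0 (2 * π) := mem_ae_iff.2 hsupp
  have h0 : μ (Iio 0) = 0 := measure_mono_null
    (fun _ hx h => (mem_Iio.1 hx).not_ge h.1 : Iio 0 ⊆ (Ico 0 (2 * π))ᶜ) hsupp
  have h2π : ∀ᵐ u ∂volume.restrict (Ioo 0 1), qf μ u < 2 * π :=
    (ae_iff_ae_qf h0 measurableSet_Iio).1 (hIco.mono fun _ hx => hx.2)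
  have hloop : ∫ u in Ioc t₁ t₂, exp (I * qf μ u) = 0 := by
    rw [← Zc_sub_Zc h0 hlt.le h2.2, heq, sub_self]
  have hall : ∫ u in Ioo 0 1, exp (I * qf μ u) = 0 :=
    (setIntegral_comp_qf h0 (F := fun x : ℝ => exp (I * x)) (by fun_prop)).trans hclosed
  obtain ⟨hanti, hqf⟩ := qf_eq_add_pi_and_ae_qf_eq_or_eq h0 hlt h2.2 hloop h1.1 hall h2π
  have hμ : ∀ᵐ x ∂μ, x = qf μ t₁ ∨ x = qf μ t₁ + π := by
    rw [ae_iff_ae_qf h0 (p := fun x => x = qf μ t₁ ∨ x = qf μ t₁ + π)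
      ((measurableSet_singleton _).union (measurableSet_singleton _))]
    simpa only [← hanti] using hqf
  obtain ⟨hα, hβ⟩ := measure_singleton_eq_half_of_integral_exp_eq_zero hμ hclosed
  exact ⟨hanti.trans (add_comm _ _), hα, hanti ▸ hβ⟩
end

section
/- Let ν ∈ M⁰_T, θ ∈ [0,2π], and let ν(θ) be the law of X_ν + θ mod 2π and the reflected measure ←ν(θ) the law of −(X_ν + θ) mod 2π. Then the symmetrised measure S(ν(θ)) = ½(ν(θ) + ←ν(θ)) belongs to M⁰_T, and A(S(ν(θ))) ≥ A(ν). -/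
open MeasureTheory Real Set ENNReal

noncomputable def wrap (x : ℝ) : ℝ := 2*π * Int.fract (x / (2*π))

noncomputable def cconv (μ ν : Measure ℝ) : Measure ℝ :=
  Measure.map (fun p : ℝ × ℝ => wrap (p.1 + p.2)) (μ.prod ν)

noncomputable def aF (μ : Measure ℝ) (k : ℕ) : ℝ := (1/π) * ∫ x, Real.cos (k * x) ∂μ

noncomputable def bF (μ : Measure ℝ) (k : ℕ) : ℝ := (1/π) * ∫ x, Real.sin (k * x) ∂μ

noncomputable def areaH (μ : Measure ℝ) : ℝ :=
  1/(4*π) - (π/2) * ∑' k : ℕ, (aF μ (k+2)^2 + bF μ (k+2)^2) / (((k:ℝ)+2)^2 - 1)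

/-!
Write `φ_μ(k) = ∫ e^{ikx} dμ` (Mathlib's `charFun`), so that `a_k² + b_k² = |φ_μ(k)|² / π²`.
Reducing mod `2π` does not change `φ` at integers, rotating by `θ` multiplies `φ(k)` by `e^{ikθ}`,
and reflecting conjugates it. Hence `φ_S(k) = Re (e^{ikθ} φ_ν(k))`: it vanishes at `k = 1` and has
modulus at most `|φ_ν(k)|`, so each term of Hurwitz's series for `S` is dominated by the
corresponding term for `ν`.
-/

open BoundedContinuousFunction
open scoped ComplexConjugate

lemma measurable_wrap : Measurable wrap :=
  (measurable_fract.comp (measurable_id.div_const _)).const_mul _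

lemma wrap_mem_Ico (x : ℝ) : wrap x ∈ Ico 0 (2*π) := by
  have h2π : (0:ℝ) < 2*π := by positivity
  exact ⟨mul_nonneg h2π.le (Int.fract_nonneg _),
    by simpa [wrap] using mul_lt_mul_of_pos_left (Int.fract_lt_one (x / (2*π))) h2π⟩

lemma wrap_eq_sub_floor_mul (x : ℝ) : wrap x = x - ⌊x / (2*π)⌋ * (2*π) := by
  rw [wrap, Int.fract]
  field_simp

lemma map_wrap_compl_Ico (μ : Measure ℝ) : μ.map wrap (Ico 0 (2*π))ᶜ = 0 := by
  rw [Measure.map_apply measurable_wrap measurableSet_Ico.compl]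
  convert measure_empty (μ := μ)
  ext x
  simpa using wrap_mem_Ico x

lemma cexp_intCast_mul_wrap_mul_I (k : ℤ) (x : ℝ) :
    Complex.exp ((k : ℝ) * wrap x * Complex.I) = Complex.exp ((k : ℝ) * x * Complex.I) :=
  Complex.exp_eq_exp_iff_exists_int.mpr
    ⟨-(k * ⌊x / (2*π)⌋), by rw [wrap_eq_sub_floor_mul]; push_cast; ring⟩

lemma charFun_map_wrap (μ : Measure ℝ) (k : ℤ) : charFun (μ.map wrap) k = charFun μ k := by
  rw [charFun_apply_real, charFun_apply_real,
    integral_map measurable_wrap.aemeasurable (by fun_prop)]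
  simp_rw [cexp_intCast_mul_wrap_mul_I]

section CharFun

variable {E : Type*} [NormedAddCommGroup E] [InnerProductSpace ℝ E] [MeasurableSpace E]

lemma charFun_map_neg [BorelSpace E] (μ : Measure E) (t : E) :
    charFun (μ.map Neg.neg) t = conj (charFun μ t) := by
  rw [← charFun_neg, show -t = (-1 : ℝ) • t by simp, ← charFun_map_smul]
  congr 2 with x
  simp

lemma charFun_add_measure [OpensMeasurableSpace E] (μ ν : Measure E) [IsFiniteMeasure μ]
    [IsFiniteMeasure ν] (t : E) : charFun (μ + ν) t = charFun μ t + charFun ν t := by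
  simp only [charFun_eq_integral_innerProbChar]
  exact integral_add_measure ((innerProbChar t).integrable μ) ((innerProbChar t).integrable ν)

lemma charFun_smul_measure (μ : Measure E) (c : ℝ≥0∞) (t : E) :
    charFun (c • μ) t = c.toReal • charFun μ t :=
  integral_smul_measure _ c

noncomputable def symmetrization (ρ : Measure E) : Measure E :=
  (1/2 : ℝ≥0∞) • ρ + (1/2 : ℝ≥0∞) • ρ.map Neg.neg

instance isProbabilityMeasure_symmetrization [BorelSpace E] (ρ : Measure E)
    [IsProbabilityMeasure ρ] : IsProbabilityMeasure (symmetrization ρ) := by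
  have := Measure.isProbabilityMeasure_map (μ := ρ) measurable_neg.aemeasurable
  constructor
  simp [symmetrization, ENNReal.inv_two_add_inv_two]

lemma charFun_symmetrization [BorelSpace E] (ρ : Measure E) [IsFiniteMeasure ρ] (t : E) :
    charFun (symmetrization ρ) t = (charFun ρ t).re := by
  have := (ρ.map Neg.neg).smul_finite (c := 1/2) (by simp)
  have := ρ.smul_finite (c := 1/2) (by simp)
  rw [symmetrization, charFun_add_measure, charFun_smul_measure, charFun_smul_measure,
    charFun_map_neg, Complex.re_eq_add_conj]
  simp only [one_div, ENNReal.toReal_inv, ENNReal.toReal_ofNat, Complex.real_smul]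
  push_cast
  ring

end CharFun

lemma integrable_cexp_mul_I (μ : Measure ℝ) [IsFiniteMeasure μ] (t : ℝ) :
    Integrable (fun x : ℝ => Complex.exp (t * x * Complex.I)) μ :=
  (integrable_const (1 : ℝ)).mono' (by fun_prop)
    (ae_of_all _ fun x => by rw [← Complex.ofReal_mul, Complex.norm_exp_ofReal_mul_I])

lemma aF_eq_re_charFun (μ : Measure ℝ) [IsFiniteMeasure μ] (k : ℕ) :
    aF μ k = (charFun μ k).re / π := by
  have h := integral_re (integrable_cexp_mul_I μ k)
  simp only [RCLike.re_to_complex, ← Complex.ofReal_mul, Complex.exp_ofReal_mul_I_re] at h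
  rw [aF, h, charFun_apply_real]
  push_cast
  ring

lemma bF_eq_im_charFun (μ : Measure ℝ) [IsFiniteMeasure μ] (k : ℕ) :
    bF μ k = (charFun μ k).im / π := by
  have h := integral_im (integrable_cexp_mul_I μ k)
  simp only [RCLike.im_to_complex, ← Complex.ofReal_mul, Complex.exp_ofReal_mul_I_im] at h
  rw [bF, h, charFun_apply_real]
  push_cast
  ring

lemma aF_sq_add_bF_sq (μ : Measure ℝ) [IsFiniteMeasure μ] (k : ℕ) :
    aF μ k ^ 2 + bF μ k ^ 2 = ‖charFun μ k‖ ^ 2 / π ^ 2 := by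
  rw [aF_eq_re_charFun, bF_eq_im_charFun, Complex.sq_norm, Complex.normSq_apply]
  ring

/-- The paper's `S(ν(θ))`. -/
noncomputable def symmetrizedRotation (θ : ℝ) (ν : Measure ℝ) : Measure ℝ :=
  (symmetrization (ν.map (· + θ))).map wrap

instance isProbabilityMeasure_symmetrizedRotation (θ : ℝ) (ν : Measure ℝ)
    [IsProbabilityMeasure ν] : IsProbabilityMeasure (symmetrizedRotation θ ν) :=
  have := Measure.isProbabilityMeasure_map (μ := ν) (measurable_add_const θ).aemeasurable
  Measure.isProbabilityMeasure_map measurable_wrap.aemeasurable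

lemma symmetrizedRotation_eq (θ : ℝ) (ν : Measure ℝ) :
    symmetrizedRotation θ ν
      = (1/2 : ℝ≥0∞) • ν.map (fun x => wrap (x + θ))
        + (1/2 : ℝ≥0∞) • ν.map (fun x => wrap (-(x + θ))) := by
  rw [symmetrizedRotation, symmetrization, Measure.map_add _ _ measurable_wrap, Measure.map_smul,
    Measure.map_smul, Measure.map_map measurable_neg (measurable_add_const θ),
    Measure.map_map measurable_wrap (measurable_add_const θ),
    Measure.map_map measurable_wrap (measurable_neg.comp (measurable_add_const θ))]
  rfl

lemma charFun_symmetrizedRotation (θ : ℝ) (ν : Measure ℝ) [IsFiniteMeasure ν] (k : ℤ) :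
    charFun (symmetrizedRotation θ ν) k
      = (charFun ν k * Complex.exp (k * θ * Complex.I)).re := by
  rw [symmetrizedRotation, charFun_map_wrap, charFun_symmetrization, charFun_map_add_const]
  simp only [RCLike.inner_apply, conj_trivial]
  push_cast
  rfl

lemma norm_charFun_symmetrizedRotation_le (θ : ℝ) (ν : Measure ℝ) [IsFiniteMeasure ν]
    (k : ℤ) :
    ‖charFun (symmetrizedRotation θ ν) k‖ ≤ ‖charFun ν k‖ := by
  rw [charFun_symmetrizedRotation, Complex.norm_real]
  calc ‖(charFun ν k * Complex.exp (k * θ * Complex.I)).re‖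
      ≤ ‖charFun ν k * Complex.exp (k * θ * Complex.I)‖ := Complex.abs_re_le_norm _
    _ = ‖charFun ν k‖ := by
      rw [norm_mul, ← Complex.ofReal_intCast, ← Complex.ofReal_mul,
        Complex.norm_exp_ofReal_mul_I, mul_one]

lemma add_two_sq_sub_one_pos (k : ℕ) : (0 : ℝ) < ((k : ℝ) + 2) ^ 2 - 1 := by
  nlinarith [k.cast_nonneg (α := ℝ)]

lemma summable_one_div_add_two_sq_sub_one :
    Summable (fun k : ℕ => 1 / (((k : ℝ) + 2) ^ 2 - 1)) := by
  have h : Summable (fun k : ℕ => 1 / ((k : ℝ) + 1) ^ 2) := by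
    simpa using (summable_nat_add_iff 1).mpr (Real.summable_one_div_nat_pow.mpr one_lt_two)
  refine h.of_nonneg_of_le (fun k => ?_) (fun k => ?_)
  · exact one_div_nonneg.mpr (add_two_sq_sub_one_pos k).le
  · gcongr
    nlinarith [k.cast_nonneg (α := ℝ)]

lemma summable_areaH_series (μ : Measure ℝ) [IsFiniteMeasure μ] :
    Summable (fun k : ℕ => (aF μ (k+2)^2 + bF μ (k+2)^2) / (((k:ℝ)+2)^2 - 1)) := by
  refine (summable_one_div_add_two_sq_sub_one.mul_left (μ.real univ ^ 2 / π ^ 2)).of_nonneg_of_le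
    (fun k => div_nonneg (by positivity) (add_two_sq_sub_one_pos k).le) (fun k => ?_)
  rw [aF_sq_add_bF_sq, mul_one_div]
  gcongr
  · exact (add_two_sq_sub_one_pos k).le
  · exact norm_charFun_le _

lemma areaH_le_areaH {μ ν : Measure ℝ}
    (hν : Summable (fun k : ℕ => (aF ν (k+2)^2 + bF ν (k+2)^2) / (((k:ℝ)+2)^2 - 1)))
    (h : ∀ k, aF μ k ^ 2 + bF μ k ^ 2 ≤ aF ν k ^ 2 + bF ν k ^ 2) :
    areaH ν ≤ areaH μ := by
  have hterm (k : ℕ) := div_le_div_of_nonneg_right (h (k + 2)) (add_two_sq_sub_one_pos k).le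
  have hμ := hν.of_nonneg_of_le
    (fun k => div_nonneg (by positivity) (add_two_sq_sub_one_pos k).le) hterm
  rw [areaH, areaH]
  gcongr _ - _ * ?_
  exact hμ.tsum_le_tsum hterm hν

theorem stmt13_general (ν : Measure ℝ) [IsProbabilityMeasure ν]
    (hν0 : ∫ x, Complex.exp (Complex.I * x) ∂ν = 0)
    (θ : ℝ)
    (S : Measure ℝ)
    (hS : S = (1/2 : ℝ≥0∞) • Measure.map (fun x => wrap (x + θ)) ν
            + (1/2 : ℝ≥0∞) • Measure.map (fun x => wrap (-(x + θ))) ν) :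
    IsProbabilityMeasure S
    ∧ S (Set.Ico 0 (2*π))ᶜ = 0
    ∧ (∫ x, Complex.exp (Complex.I * x) ∂S = 0)
    ∧ areaH ν ≤ areaH S := by
  rw [← symmetrizedRotation_eq] at hS
  subst hS
  have hfirst (μ : Measure ℝ) :
      ∫ x, Complex.exp (Complex.I * x) ∂μ = charFun μ ((1 : ℤ) : ℝ) := by
    simp [charFun_apply_real, mul_comm]
  refine ⟨inferInstance, map_wrap_compl_Ico _, ?_, ?_⟩
  · rw [hfirst, charFun_symmetrizedRotation, ← hfirst, hν0]
    simp
  · refine areaH_le_areaH (summable_areaH_series ν) fun k => ?_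
    rw [aF_sq_add_bF_sq, aF_sq_add_bF_sq]
    gcongr
    exact_mod_cast norm_charFun_symmetrizedRotation_le θ ν k

theorem stmt13 (ν : Measure ℝ) [IsProbabilityMeasure ν]
    (hνs : ν (Set.Ico 0 (2*π))ᶜ = 0)
    (hν0 : ∫ x, Complex.exp (Complex.I * x) ∂ν = 0)
    (θ : ℝ) (hθ : θ ∈ Set.Icc 0 (2*π))
    (S : Measure ℝ)
    (hS : S = (1/2 : ℝ≥0∞) • Measure.map (fun x => wrap (x + θ)) ν
            + (1/2 : ℝ≥0∞) • Measure.map (fun x => wrap (-(x + θ))) ν) :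
    IsProbabilityMeasure S
    ∧ S (Set.Ico 0 (2*π))ᶜ = 0
    ∧ (∫ x, Complex.exp (Complex.I * x) ∂S = 0)
    ∧ areaH ν ≤ areaH S :=
  stmt13_general ν hν0 θ S hS
end
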